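/- Lyapunov multi-function induction inequality: Let A_1,…,A_M ∈ ℝ^{n×n}, G = (S,E,p) a stochastic graph on ⟨M⟩, ρ ≥ 0, and F = {f_a : a ∈ S} a family of continuous, positive definite, positively homogeneous functions ℝⁿ → ℝ satisfying ∏_{i∈⟨M⟩} ∏_{b∈S} f_b(A_i x)^{p_{a,b,i}} ≤ ρ f_a(x) for all x ∈ ℝⁿ and a ∈ S. Then for every k ∈ ℕ, every initial distribution ξ on S, and every x ∈ ℝⁿ: ∏_{s∈S} ∏_{ĵ∈⟨M⟩^k} f_s(A(ĵ)x)^{ℙ_{G,ξ}(s,ĵ)} ≤ ρ^k ∏_{s∈S} f_s(x)^{ξ(s)}, where A(ĵ) = A_{j_{k-1}} ⋯ A_{j_0}. -/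

import Mathlib

/-- `ℙ_{G,ξ}(s, w)`. -/
noncomputable def PP {S ι : Type*} [Fintype S] (p : S → S → ι → ℝ) (ξ : S → ℝ) :
    (k : ℕ) → S → (Fin k → ι) → ℝ
  | 0, s, _ => ξ s
  | k + 1, s, w => ∑ a, PP p ξ k a (Fin.init w) * p a s (w (Fin.last k))

/-- `A(w) = A_{w_{k-1}} ⋯ A_{w_0}` (letter at index 0 acts first). -/
noncomputable def Aw {ι : Type*} {n : ℕ} (A : ι → Matrix (Fin n) (Fin n) ℝ) :
    (k : ℕ) → (Fin k → ι) → Matrix (Fin n) (Fin n) ℝ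
  | 0, _ => 1
  | k + 1, w => A (w (Fin.last k)) * Aw A k (Fin.init w)

/-! Induction on the word length, peeling off the last letter. For a word `w` of length `k`
and `y = A(w) x`, the weights of its extensions are `ℙ(s, w i) = ∑ a, ℙ(a, w) p a s i`;
regrouping exponents, the product over these extensions becomes
`∏ a, (∏ i, ∏ b, f b (A i y) ^ p a b i) ^ ℙ(a, w)`, which the Lyapunov inequality bounds by
`ρ ^ (∑ a, ℙ(a, w)) * ∏ a, f a y ^ ℙ(a, w)`. As `p` is stochastic, the total mass
`∑ w, ∑ s, ℙ(s, w)` stays equal to `∑ s, ξ s = 1`, so each step costs exactly one factor `ρ`. -/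

open Finset Matrix

@[to_additive]
theorem prod_pi_fin_succ_eq_prod_snoc {ι β : Type*} [Fintype ι] [CommMonoid β] {k : ℕ}
    (F : (Fin (k + 1) → ι) → β) :
    ∏ w : Fin (k + 1) → ι, F w = ∏ w : Fin k → ι, ∏ i : ι, F (Fin.snoc w i) := by
  rw [← (Fin.snocEquiv fun _ => ι).prod_comp F, Fintype.prod_prod_type, prod_comm]
  simp [Fin.snocEquiv]

theorem prod_rpow_sum_mul_eq_prod_rpow {ι S : Type*} [Fintype ι] [Fintype S]
    {g : ι → S → ℝ} {p : S → S → ι → ℝ} {q : S → ℝ} (hg : ∀ i s, 0 ≤ g i s)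
    (hp : ∀ a b i, 0 ≤ p a b i) (hq : ∀ a, 0 ≤ q a) :
    ∏ i, ∏ s, g i s ^ (∑ a, q a * p a s i) = ∏ a, (∏ i, ∏ s, g i s ^ p a s i) ^ q a := by
  have hsplit : ∀ i s, g i s ^ (∑ a, q a * p a s i) = ∏ a, (g i s ^ p a s i) ^ q a := by
    intro i s
    rw [Real.rpow_sum_of_nonneg (hg i s) fun a _ => mul_nonneg (hq a) (hp a s i)]
    exact prod_congr rfl fun a _ => by rw [mul_comm, Real.rpow_mul (hg i s)]
  simp_rw [hsplit]
  rw [prod_congr rfl fun _ _ => prod_comm, prod_comm]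
  refine prod_congr rfl fun a _ => ?_
  have hrow : ∀ i s, 0 ≤ g i s ^ p a s i := fun i s => Real.rpow_nonneg (hg i s) _
  rw [← Real.finsetProd_rpow _ _ (fun i _ => prod_nonneg fun s _ => hrow i s)]
  exact prod_congr rfl fun i _ => Real.finsetProd_rpow _ _ (fun s _ => hrow i s) _

section Words

variable {S ι : Type*} [Fintype S] {p : S → S → ι → ℝ} {ξ : S → ℝ}

theorem PP_snoc {k : ℕ} (s : S) (w : Fin k → ι) (i : ι) :
    PP p ξ (k + 1) s (Fin.snoc w i) = ∑ a, PP p ξ k a w * p a s i := by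
  simp [PP, Fin.init_snoc, Fin.snoc_last]

theorem PP_nonneg (hp : ∀ a b i, 0 ≤ p a b i) (hξ : ∀ s, 0 ≤ ξ s) :
    ∀ (k : ℕ) (s : S) (w : Fin k → ι), 0 ≤ PP p ξ k s w
  | 0, s, _ => hξ s
  | k + 1, s, _ => sum_nonneg fun a _ => mul_nonneg (PP_nonneg hp hξ k a _) (hp a s _)

theorem sum_sum_PP [Fintype ι] (hp : ∀ a, ∑ b, ∑ i, p a b i = 1) (k : ℕ) :
    ∑ w : Fin k → ι, ∑ s, PP p ξ k s w = ∑ s, ξ s := by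
  induction k with
  | zero => simp [PP]
  | succ k ih =>
    rw [sum_pi_fin_succ_eq_sum_snoc, ← ih]
    refine sum_congr rfl fun w _ => ?_
    simp only [PP_snoc]
    rw [sum_comm, sum_congr rfl fun _ _ => sum_comm, sum_comm]
    simp_rw [← mul_sum, hp, mul_one]

theorem Aw_snoc {n k : ℕ} (A : ι → Matrix (Fin n) (Fin n) ℝ) (w : Fin k → ι) (i : ι) :
    Aw A (k + 1) (Fin.snoc w i) = A i * Aw A k w := by
  simp [Aw, Fin.init_snoc, Fin.snoc_last]

end Words

section Lyapunov

variable {S ι : Type*} [Fintype S] [Fintype ι] {n : ℕ} {A : ι → Matrix (Fin n) (Fin n) ℝ}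
  {p : S → S → ι → ℝ} {ρ : ℝ} {f : S → (Fin n → ℝ) → ℝ}

theorem lyapunov_weighted_le (hp : ∀ a b i, 0 ≤ p a b i) (hρ : 0 ≤ ρ)
    (hf : ∀ a y, 0 ≤ f a y)
    (hLMF : ∀ a y, ∏ i, ∏ b, f b (A i *ᵥ y) ^ p a b i ≤ ρ * f a y)
    (y : Fin n → ℝ) {q : S → ℝ} (hq : ∀ a, 0 ≤ q a) :
    ∏ i, ∏ s, f s (A i *ᵥ y) ^ (∑ a, q a * p a s i) ≤ ρ ^ (∑ a, q a) * ∏ a, f a y ^ q a := by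
  rw [prod_rpow_sum_mul_eq_prod_rpow (fun _ _ => hf _ _) hp hq,
    Real.rpow_sum_of_nonneg hρ fun a _ => hq a, ← prod_mul_distrib]
  refine prod_le_prod (fun a _ => Real.rpow_nonneg
    (prod_nonneg fun i _ => prod_nonneg fun s _ => Real.rpow_nonneg (hf _ _) _) _) fun a _ => ?_
  rw [← Real.mul_rpow hρ (hf a y)]
  exact Real.rpow_le_rpow (prod_nonneg fun i _ => prod_nonneg fun s _ =>
    Real.rpow_nonneg (hf _ _) _) (hLMF a y) (hq a)

theorem lyapunov_prod_succ_le {ξ : S → ℝ} (hp : ∀ a b i, 0 ≤ p a b i)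
    (hstoch : ∀ a, ∑ b, ∑ i, p a b i = 1) (hρ : 0 ≤ ρ) (hf : ∀ a y, 0 ≤ f a y)
    (hLMF : ∀ a y, ∏ i, ∏ b, f b (A i *ᵥ y) ^ p a b i ≤ ρ * f a y)
    (hξ : ∀ s, 0 ≤ ξ s) (k : ℕ) (x : Fin n → ℝ) :
    ∏ s, ∏ w : Fin (k + 1) → ι, f s (Aw A (k + 1) w *ᵥ x) ^ PP p ξ (k + 1) s w
      ≤ ρ ^ (∑ s, ξ s) * ∏ s, ∏ w : Fin k → ι, f s (Aw A k w *ᵥ x) ^ PP p ξ k s w := by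
  have hPP := PP_nonneg hp hξ k
  rw [prod_comm, prod_pi_fin_succ_eq_prod_snoc, ← sum_sum_PP (ξ := ξ) hstoch k,
    Real.rpow_sum_of_nonneg hρ fun w _ => sum_nonneg fun s _ => hPP s w,
    prod_comm (s := univ (α := S)), ← prod_mul_distrib]
  refine prod_le_prod (fun w _ => prod_nonneg fun i _ => prod_nonneg fun s _ =>
    Real.rpow_nonneg (hf _ _) _) fun w _ => ?_
  simp_rw [Aw_snoc, PP_snoc, ← mulVec_mulVec]
  exact lyapunov_weighted_le hp hρ hf hLMF _ fun a => hPP a w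

end Lyapunov

theorem LMF_induction_general
    {S : Type*} [Fintype S] (M n : ℕ)
    (A : Fin M → Matrix (Fin n) (Fin n) ℝ)
    (p : S → S → Fin M → ℝ)
    (hnonneg : ∀ a b i, 0 ≤ p a b i)
    (hstoch : ∀ a : S, ∑ b : S, ∑ i : Fin M, p a b i = 1)
    (ρ : ℝ) (hρ : 0 ≤ ρ)
    (f : S → (Fin n → ℝ) → ℝ)
    (hpos : ∀ a x, x ≠ 0 → 0 < f a x) (hzero : ∀ a, f a 0 = 0)
    (hLMF : ∀ (a : S) (x : Fin n → ℝ),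
      ∏ i : Fin M, ∏ b : S, f b ((A i).mulVec x) ^ p a b i ≤ ρ * f a x)
    (ξ : S → ℝ) (hξ0 : ∀ s, 0 ≤ ξ s) (hξ1 : ∑ s : S, ξ s = 1)
    (k : ℕ) (x : Fin n → ℝ) :
    ∏ s : S, ∏ w : Fin k → Fin M, f s ((Aw A k w).mulVec x) ^ PP p ξ k s w
      ≤ ρ ^ k * ∏ s : S, f s x ^ ξ s := by
  have hf : ∀ a y, 0 ≤ f a y := fun a y => by
    rcases eq_or_ne y 0 with rfl | hy
    · exact (hzero a).ge
    · exact (hpos a y hy).le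
  induction k with
  | zero => simp [Aw, PP]
  | succ k ih =>
    calc _ ≤ ρ ^ (∑ s, ξ s) * ∏ s, ∏ w : Fin k → Fin M, f s (Aw A k w *ᵥ x) ^ PP p ξ k s w :=
          lyapunov_prod_succ_le hnonneg hstoch hρ hf hLMF hξ0 k x
      _ ≤ ρ * (ρ ^ k * ∏ s, f s x ^ ξ s) := by
          rw [hξ1, Real.rpow_one]
          exact mul_le_mul_of_nonneg_left ih hρ
      _ = ρ ^ (k + 1) * ∏ s, f s x ^ ξ s := by ring

/-- Lyapunov multi-function induction inequality.  Here `x ^ r`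
for real `r` denotes `Real.rpow` (so `0 ^ 0 = 1`). -/
theorem LMF_induction
    {S : Type*} [Fintype S] (M n : ℕ)
    (A : Fin M → Matrix (Fin n) (Fin n) ℝ)
    (p : S → S → Fin M → ℝ)
    (hnonneg : ∀ a b i, 0 ≤ p a b i)
    (hstoch : ∀ a : S, ∑ b : S, ∑ i : Fin M, p a b i = 1)
    (ρ : ℝ) (hρ : 0 ≤ ρ)
    (f : S → (Fin n → ℝ) → ℝ)
    (hcont : ∀ a, Continuous (f a))
    (hpos : ∀ a x, x ≠ 0 → 0 < f a x) (hzero : ∀ a, f a 0 = 0)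
    (hhom : ∀ a (c : ℝ) x, 0 ≤ c → f a (c • x) = c * f a x)
    (hLMF : ∀ (a : S) (x : Fin n → ℝ),
      ∏ i : Fin M, ∏ b : S, f b ((A i).mulVec x) ^ p a b i ≤ ρ * f a x)
    (ξ : S → ℝ) (hξ0 : ∀ s, 0 ≤ ξ s) (hξ1 : ∑ s : S, ξ s = 1)
    (k : ℕ) (x : Fin n → ℝ) :
    ∏ s : S, ∏ w : Fin k → Fin M, f s ((Aw A k w).mulVec x) ^ PP p ξ k s w
      ≤ ρ ^ k * ∏ s : S, f s x ^ ξ s :=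
  LMF_induction_general M n A p hnonneg hstoch ρ hρ f hpos hzero hLMF ξ hξ0 hξ1 k x
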